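/- Let q ∈ UCRPQ(a, a*) over a finite alphabet Σ. Then the family {A ⊆ Σ : q is A-bounded} has a greatest element under inclusion; in particular, there is a unique ⊆-maximal set A ⊆ Σ such that q is A-bounded, namely the union of all sets B ⊆ Σ such that q is B-bounded. -/

import Mathlib

/-!
If `q` is `A`-bounded, say `q ≡ q'` where `q'` has no star on a letter of `A`, then
`q ≡ q(A, m)` for some `m`. Indeed, a database satisfying `q` receives an expansion `E` of `q'`,
and `E` itself satisfies `q`. In `E` an `a`-edge with `a ∈ A` can only leave a vertex on the
expansion of an SSF atom, so at most `m = ‖q'‖ · N` vertices (`N` bounding the lengths of the SSF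
words of `q'`) have one, and the `a`-paths witnessing `q` in `E` shrink to length `≤ m` by
cutting out cycles. Applying this first to `A` and then, on `q(A, m)`, to `B` shows that
`A`-bounded and `B`-bounded queries are `(A ∪ B)`-bounded; as `Σ` is finite, the union of all such
sets is again one.
-/

namespace Paper

/-! ## Words -/

/-- `wpow w n` is the word `w` repeated `n` times. -/
def wpow {α : Type} (w : List α) (n : ℕ) : List α := (List.replicate n w).flatten

/-! ## Graph databases -/

/-- A graph database over the alphabet `α`: a finite set of vertices together with
labelled edges. -/
structure GDB (α : Type) : Type 1 where
  V : Type
  finV : Finite V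
  edges : Set (V × α × V)

/-! ## Conjunctive queries -/

/-- A (Boolean) conjunctive query over `α`: a finite set of variables and a set of
atoms `x —a→ y` with `a ∈ α`. -/
structure CQ (α : Type) : Type 1 where
  V : Type
  finV : Finite V
  atoms : Set (V × α × V)

variable {α : Type}

/-- `h` is a homomorphism from the CQ `p` to the CQ `p'`. -/
def CQ.Hom (p p' : CQ α) (h : p.V → p'.V) : Prop :=
  ∀ x a y, (x, a, y) ∈ p.atoms → (h x, a, h y) ∈ p'.atoms

/-- There is a homomorphism from the CQ `p` to the CQ `p'`. -/
def CQ.homTo (p p' : CQ α) : Prop := ∃ h, p.Hom p' h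

/-- There is a homomorphism from the CQ `p` to the graph database `G`. -/
def CQ.homToG (p : CQ α) (G : GDB α) : Prop :=
  ∃ h : p.V → G.V, ∀ x a y, (x, a, y) ∈ p.atoms → (h x, a, h y) ∈ G.edges

/-! ## CRPQs -/

/-- A (Boolean) conjunctive regular path query over alphabet `α` with variables `V`:
a finite conjunction of atoms `src i —lang i→ tgt i`. -/
structure CRPQ (α V : Type) where
  k : ℕ
  src : Fin k → V
  lang : Fin k → Set (List α)
  tgt : Fin k → V

variable {V : Type}

/-! ## Expansions -/

/-- Variables of an expansion before collapsing equality atoms: the original variables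
plus, for each atom `i` expanded by the word `w i`, the fresh variables
`z_1, …, z_{|w i| - 1}`. -/
def RawVar (q : CRPQ α V) (w : Fin q.k → List α) : Type :=
  V ⊕ (Σ i : Fin q.k, Fin ((w i).length - 1))

instance {q : CRPQ α V} [Finite V] {w : Fin q.k → List α} : Finite (RawVar q w) := by
  unfold RawVar; infer_instance

/-- The `j`-th variable (`0 ≤ j ≤ |w i|`) on the path expanding atom `i`:
position `0` is the source variable, position `|w i|` the target variable, and the
intermediate positions are fresh variables. -/
def node (q : CRPQ α V) (w : Fin q.k → List α) (i : Fin q.k) (j : ℕ) : RawVar q w :=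
  if j = 0 then Sum.inl (q.src i)
  else if j = (w i).length then Sum.inl (q.tgt i)
  else if h : j - 1 < (w i).length - 1 then Sum.inr ⟨i, ⟨j - 1, h⟩⟩
  else Sum.inl (q.src i)

/-- The equality atoms produced by `ε`-expansions: `src i = tgt i` whenever `w i = ε`.
(The expansion collapses the equivalence they generate.) -/
def eqRel (q : CRPQ α V) (w : Fin q.k → List α) : RawVar q w → RawVar q w → Prop :=
  fun x y => ∃ i, w i = [] ∧ x = Sum.inl (q.src i) ∧ y = Sum.inl (q.tgt i)

/-- The expansion of the CRPQ `q` obtained by expanding each atom `i` with the word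
`w i`: each atom is replaced by its `w i`-expansion, and equality atoms are collapsed. -/
def expansion (q : CRPQ α V) [Finite V] (w : Fin q.k → List α) : CQ α where
  V := Quot (eqRel q w)
  finV := Finite.of_surjective (Quot.mk _) fun x => Quot.exists_rep x
  atoms := { t | ∃ (i : Fin q.k) (j : ℕ) (hj : j < (w i).length),
    t = (Quot.mk _ (node q w i j), (w i).get ⟨j, hj⟩, Quot.mk _ (node q w i (j + 1))) }

/-- `Exp q`: the set of all expansions of the CRPQ `q`. -/
def Exp (q : CRPQ α V) [Finite V] : Set (CQ α) :=
  { p | ∃ w : Fin q.k → List α, (∀ i, w i ∈ q.lang i) ∧ p = expansion q w }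

/-- `Expm q m`: the set of all `m`-expansions of the CRPQ `q`. -/
def Expm (q : CRPQ α V) [Finite V] (m : ℕ) : Set (CQ α) :=
  { p | ∃ w : Fin q.k → List α,
      (∀ i, w i ∈ q.lang i) ∧ (∀ i, (w i).length ≤ m) ∧ p = expansion q w }

/-! ## UCRPQs, satisfaction, containment, boundedness -/

/-- The set of expansions of a UCRPQ (a finite disjunction of CRPQs). -/
def ExpU (Q : List (CRPQ α V)) [Finite V] : Set (CQ α) :=
  { p | ∃ q ∈ Q, p ∈ Exp q }

/-- The set of `m`-expansions of a UCRPQ. -/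
def ExpmU (Q : List (CRPQ α V)) [Finite V] (m : ℕ) : Set (CQ α) :=
  { p | ∃ q ∈ Q, p ∈ Expm q m }

/-- Satisfaction of a (possibly infinite) disjunction of CQs by a graph database. -/
def SatSet (S : Set (CQ α)) (G : GDB α) : Prop := ∃ p ∈ S, p.homToG G

/-- `G ⊨ Q` for a UCRPQ `Q`: some expansion of `Q` maps homomorphically into `G`. -/
def Sat (Q : List (CRPQ α V)) [Finite V] (G : GDB α) : Prop := SatSet (ExpU Q) G

/-- Containment of queries (viewed as properties of graph databases):
every graph database satisfying the first satisfies the second. -/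
def Contained (P P' : GDB α → Prop) : Prop := ∀ G, P G → P' G

/-- Equivalence of queries (viewed as properties of graph databases). -/
def QEquiv (P P' : GDB α → Prop) : Prop := ∀ G, P G ↔ P' G

/-- A query is bounded iff it is equivalent to some UCQ (finite disjunction of CQs). -/
def Bounded (P : GDB α → Prop) : Prop :=
  ∃ Φ : List (CQ α), ∀ G, P G ↔ ∃ p ∈ Φ, p.homToG G


/-! ## The class UCRPQ(SSF, w*) -/

/-- An atom language in the class (SSF, w*): either a succinct star-free expression
(denoting a finite language), or `w*` for a word `w`. -/
inductive AtomLang (α : Type) : Type where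
  | ssf (L : Set (List α)) (h : L.Finite) : AtomLang α
  | star (w : List α) : AtomLang α

variable {α V : Type}

/-- The language denoted by an atom of the class (SSF, w*). -/
def AtomLang.language : AtomLang α → Set (List α)
  | .ssf L _ => L
  | .star w => { u | ∃ n, u = wpow w n }

/-- A CRPQ all of whose atom languages are SSF expressions or expressions `w*`. -/
structure SCRPQ (α V : Type) where
  k : ℕ
  src : Fin k → V
  lang : Fin k → AtomLang α
  tgt : Fin k → V

/-- The underlying CRPQ of an SCRPQ. -/
def SCRPQ.toCRPQ (q : SCRPQ α V) : CRPQ α V :=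
  ⟨q.k, q.src, fun i => (q.lang i).language, q.tgt⟩

/-- The underlying UCRPQ of a UCRPQ in the class (SSF, w*). -/
def toU (Q : List (SCRPQ α V)) : List (CRPQ α V) := Q.map SCRPQ.toCRPQ

/-- Satisfaction for UCRPQs of the class (SSF, w*). -/
def SatS (Q : List (SCRPQ α V)) [Finite V] (G : GDB α) : Prop := Sat (toU Q) G

/-- `AtomLang.cut m`: replace `w*` with `w^{≤m} = {w^n : n ≤ m}`; SSF atoms unchanged. -/
def AtomLang.cut (m : ℕ) : AtomLang α → AtomLang α
  | .ssf L h => .ssf L h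
  | .star w => .ssf (wpow w '' Set.Iic m) ((Set.finite_Iic m).image _)

/-- `q(m)` for a CRPQ: replace every expression `w*` with `w^{≤m}`. -/
def SCRPQ.cut (m : ℕ) (q : SCRPQ α V) : SCRPQ α V :=
  ⟨q.k, q.src, fun i => (q.lang i).cut m, q.tgt⟩

/-- `q(m)` for a UCRPQ: replace every expression `w*` with `w^{≤m}`. -/
def qcut (Q : List (SCRPQ α V)) (m : ℕ) : List (SCRPQ α V) := Q.map (SCRPQ.cut m)

/-- `‖Q‖`: number of atoms of the UCRPQ `Q`. -/
def natoms (Q : List (SCRPQ α V)) : ℕ := (Q.map SCRPQ.k).sum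

/-- The set `W` of words `w` such that `w*` labels a recursive atom of `Q`. -/
def recWords (Q : List (SCRPQ α V)) : Set (List α) :=
  { w | ∃ q ∈ Q, ∃ i : Fin q.k, q.lang i = AtomLang.star w }

/-- `N`: the maximum length of a word in the language of a non-recursive atom of `Q`. -/
noncomputable def nrBound (Q : List (SCRPQ α V)) : ℕ :=
  sSup { n | ∃ q ∈ Q, ∃ i : Fin q.k, ∃ (L : Set (List α)) (h : L.Finite),
    q.lang i = AtomLang.ssf L h ∧ ∃ u ∈ L, u.length = n }

/-- `Z := ‖Q‖³ · N · |vars(Q)| · Π_{w ∈ W} |w|`. -/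
noncomputable def Zbound (Q : List (SCRPQ α V)) [Fintype V] : ℕ :=
  natoms Q ^ 3 * nrBound Q * Fintype.card V * ∏ᶠ w ∈ recWords Q, w.length

/-- `Z⁺ := ‖Q‖ · Z + 1`. -/
noncomputable def Zplus (Q : List (SCRPQ α V)) [Fintype V] : ℕ :=
  natoms Q * Zbound Q + 1

/-! ## Letter-boundedness -/

/-- Membership in the class UCRPQ(SSF, a*): atoms are SSF or `a*` for a letter `a`. -/
def AtomLang.inSSFaStar : AtomLang α → Prop
  | .ssf _ _ => True
  | .star w => ∃ a, w = [a]

/-- Membership in the class UCRPQ(a, a*): every atom language is `{a}` or `{a}*`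
for a letter `a`. -/
def AtomLang.in_a_aStar : AtomLang α → Prop
  | .ssf L _ => ∃ a : α, L = {[a]}
  | .star w => ∃ a, w = [a]

/-- An atom language which is an SSF expression or `a*` only for letters `a ∉ A`. -/
def AtomLang.okOutside (A : Set α) : AtomLang α → Prop
  | .ssf _ _ => True
  | .star w => ∃ a, a ∉ A ∧ w = [a]

open Classical in
/-- Replace `a*` with `a^{≤m} = {ε, a, …, a^m}` for every letter `a ∈ A`. -/
noncomputable def AtomLang.restrict (A : Set α) (m : ℕ) : AtomLang α → AtomLang α
  | .ssf L h => .ssf L h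
  | .star w => if ∃ a ∈ A, w = [a]
      then .ssf (wpow w '' Set.Iic m) ((Set.finite_Iic m).image _)
      else .star w

/-- `q(A, m)` (also `q[A ↦ m]`) for a CRPQ. -/
noncomputable def SCRPQ.restrict (A : Set α) (m : ℕ) (q : SCRPQ α V) : SCRPQ α V :=
  ⟨q.k, q.src, fun i => (q.lang i).restrict A m, q.tgt⟩

/-- `Q(A, m)` (also `Q[A ↦ m]`): the result of replacing in `Q` every atom language
`a*` with `a ∈ A` by `a^{≤m}`. -/
noncomputable def qrestrict (Q : List (SCRPQ α V)) (A : Set α) (m : ℕ) :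
    List (SCRPQ α V) := Q.map (SCRPQ.restrict A m)

/-- `Q` is `A`-bounded: `Q` is equivalent to some UCRPQ whose atom languages are SSF
expressions or expressions `a*` only for letters `a ∉ A`. -/
def BddIn (Q : List (SCRPQ α V)) [Finite V] (A : Set α) : Prop :=
  ∃ (n : ℕ) (Q' : List (SCRPQ α (Fin n))),
    (∀ d ∈ Q', ∀ i : Fin d.k, (d.lang i).okOutside A) ∧ QEquiv (SatS Q) (SatS Q')

theorem wpow_singleton (a : α) (n : ℕ) : wpow [a] n = List.replicate n a := by
  simp [wpow]

namespace GDB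

def HasWalk (G : GDB α) (u : G.V) (l : List α) (v : G.V) : Prop :=
  ∃ f : ℕ → G.V, f 0 = u ∧ f l.length = v ∧
    ∀ (j : ℕ) (hj : j < l.length), (f j, l[j], f (j + 1)) ∈ G.edges

def HasWalkIn (G : GDB α) (u : G.V) (L : Set (List α)) (v : G.V) : Prop :=
  ∃ l ∈ L, G.HasWalk u l v

variable {G G' : GDB α} {u v : G.V}

theorem HasWalk.map {φ : G.V → G'.V}
    (hφ : ∀ x a y, (x, a, y) ∈ G.edges → (φ x, a, φ y) ∈ G'.edges) {l : List α}
    (h : G.HasWalk u l v) : G'.HasWalk (φ u) l (φ v) := by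
  obtain ⟨f, hf0, hfl, hf⟩ := h
  exact ⟨φ ∘ f, congrArg φ hf0, congrArg φ hfl, fun j hj => hφ _ _ _ (hf j hj)⟩

theorem HasWalkIn.map {φ : G.V → G'.V}
    (hφ : ∀ x a y, (x, a, y) ∈ G.edges → (φ x, a, φ y) ∈ G'.edges) {L : Set (List α)}
    (h : G.HasWalkIn u L v) : G'.HasWalkIn (φ u) L (φ v) :=
  let ⟨l, hl, hw⟩ := h
  ⟨l, hl, hw.map hφ⟩

theorem HasWalkIn.mono {L L' : Set (List α)} (hL : L ⊆ L') (h : G.HasWalkIn u L v) :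
    G.HasWalkIn u L' v :=
  let ⟨l, hl, hw⟩ := h
  ⟨l, hL hl, hw⟩

theorem hasWalk_replicate_iff {a : α} {n : ℕ} :
    G.HasWalk u (List.replicate n a) v ↔
      ∃ f : ℕ → G.V, f 0 = u ∧ f n = v ∧ ∀ j < n, (f j, a, f (j + 1)) ∈ G.edges := by
  simp [HasWalk]

end GDB

def CQ.toGDB (p : CQ α) : GDB α := ⟨p.V, p.finV, p.atoms⟩

def SCRPQ.Holds (q : SCRPQ α V) (G : GDB α) : Prop :=
  ∃ g : V → G.V, ∀ i, G.HasWalkIn (g (q.src i)) (q.lang i).language (g (q.tgt i))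

section Expansion

variable {q : CRPQ α V} {w : Fin q.k → List α} {i : Fin q.k}

theorem node_zero : node q w i 0 = .inl (q.src i) := if_pos rfl

theorem node_of_pos_of_lt {j : ℕ} (h0 : 0 < j) (hj : j < (w i).length) :
    node q w i j = .inr ⟨i, j - 1, by omega⟩ :=
  (if_neg h0.ne').trans ((if_neg hj.ne).trans (dif_pos _))

theorem mk_node_length :
    Quot.mk (eqRel q w) (node q w i (w i).length) = Quot.mk _ (.inl (q.tgt i)) := by
  by_cases h : (w i).length = 0
  · rw [h, node_zero]
    exact Quot.sound ⟨i, List.length_eq_zero_iff.mp h, rfl, rfl⟩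
  · simp [node, h]

theorem expansion_homToG_iff [Finite V] {G : GDB α} :
    (expansion q w).homToG G ↔
      ∃ g : V → G.V, ∀ i, G.HasWalk (g (q.src i)) (w i) (g (q.tgt i)) := by
  constructor
  · rintro ⟨h, hh⟩
    refine ⟨fun v => h (Quot.mk _ (.inl v)), fun i => ⟨fun j => h (Quot.mk _ (node q w i j)),
      congrArg h (congrArg _ node_zero), congrArg h mk_node_length,
      fun j hj => hh _ _ _ ⟨i, j, hj, rfl⟩⟩⟩
  · rintro ⟨g, hg⟩
    choose f hf0 hflen hf using hg
    let Φ : RawVar q w → G.V := Sum.elim g fun p => f p.1 (p.2 + 1)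
    have hΦ : ∀ i j, j ≤ (w i).length → Φ (node q w i j) = f i j := by
      intro i j hj
      rcases Nat.eq_zero_or_pos j with rfl | h0
      · rw [node_zero]
        exact (hf0 i).symm
      rcases hj.lt_or_eq with hj | rfl
      · rw [node_of_pos_of_lt h0 hj]
        exact congrArg (f i) (Nat.sub_add_cancel h0)
      · simp [node, h0.ne', Φ, hflen]
    have hresp : ∀ x y, eqRel q w x y → Φ x = Φ y := by
      rintro _ _ ⟨i, hwi, rfl, rfl⟩
      have hlen := hflen i
      simp only [hwi, List.length_nil] at hlen
      exact (hf0 i).symm.trans hlen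
    refine ⟨Quot.lift Φ hresp, ?_⟩
    rintro _ _ _ ⟨i, j, hj, h⟩
    cases h
    change (Φ (node q w i j), (w i)[j], Φ (node q w i (j + 1))) ∈ G.edges
    rw [hΦ i j hj.le, hΦ i (j + 1) hj]
    exact hf i j hj

end Expansion

section Satisfaction

variable [Finite V] {Q : List (SCRPQ α V)} {G : GDB α}

theorem satS_iff : SatS Q G ↔ ∃ q ∈ Q, q.Holds G := by
  constructor
  · rintro ⟨_, ⟨_, hqU, w, hw, rfl⟩, hp⟩
    obtain ⟨q, hq, rfl⟩ := List.mem_map.1 hqU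
    obtain ⟨g, hg⟩ := expansion_homToG_iff.1 hp
    exact ⟨q, hq, g, fun i => ⟨w i, hw i, hg i⟩⟩
  · rintro ⟨q, hq, g, hg⟩
    choose w hw hwalk using hg
    exact ⟨_, ⟨_, List.mem_map_of_mem hq, w, hw, rfl⟩, expansion_homToG_iff.2 ⟨g, hwalk⟩⟩

theorem satS_toGDB_expansion {q : SCRPQ α V} (hq : q ∈ Q) {w : Fin q.k → List α}
    (hw : ∀ i, w i ∈ (q.lang i).language) : SatS Q (expansion q.toCRPQ w).toGDB :=
  ⟨_, ⟨_, List.mem_map_of_mem hq, w, hw, rfl⟩, id, fun _ _ _ h => h⟩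

theorem satS_of_homToG {p : CQ α} (hp : p.homToG G) (h : SatS Q p.toGDB) : SatS Q G := by
  obtain ⟨φ, hφ⟩ := hp
  obtain ⟨q, hq, g, hg⟩ := satS_iff.1 h
  exact satS_iff.2 ⟨q, hq, φ ∘ g, fun i => (hg i).map hφ⟩

end Satisfaction

def SCRPQ.rename {W : Type} (e : V → W) (q : SCRPQ α V) : SCRPQ α W :=
  ⟨q.k, e ∘ q.src, q.lang, e ∘ q.tgt⟩

theorem SCRPQ.holds_rename_iff {W : Type} (e : V ≃ W) {q : SCRPQ α V} {G : GDB α} :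
    (q.rename e).Holds G ↔ q.Holds G :=
  ⟨fun ⟨g, hg⟩ => ⟨g ∘ e, hg⟩, fun ⟨g, hg⟩ => ⟨g ∘ e.symm, by simpa [SCRPQ.rename] using hg⟩⟩

theorem bddIn_of_qEquiv [Finite V] {W : Type} [Finite W] {Q : List (SCRPQ α V)}
    {Q' : List (SCRPQ α W)} {A : Set α} (hQ' : ∀ d ∈ Q', ∀ i, (d.lang i).okOutside A)
    (hQQ' : QEquiv (SatS Q) (SatS Q')) : BddIn Q A := by
  refine ⟨Nat.card W, Q'.map (SCRPQ.rename (Finite.equivFin W)), ?_, fun G => ?_⟩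
  · simp only [List.mem_map]
    rintro _ ⟨d, hd, rfl⟩
    exact hQ' d hd
  · simp [hQQ' G, satS_iff, SCRPQ.holds_rename_iff]

namespace AtomLang

theorem language_restrict_subset (A : Set α) (m : ℕ) (L : AtomLang α) :
    (L.restrict A m).language ⊆ L.language := by
  cases L with
  | ssf => exact subset_rfl
  | star w =>
    simp only [restrict]
    split_ifs
    · rintro _ ⟨n, -, rfl⟩
      exact ⟨n, rfl⟩
    · exact subset_rfl

theorem in_a_aStar.inSSFaStar {L : AtomLang α} (h : L.in_a_aStar) : L.inSSFaStar := by
  cases L with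
  | ssf => trivial
  | star => exact h

theorem inSSFaStar.okOutside_empty {L : AtomLang α} (h : L.inSSFaStar) : L.okOutside ∅ := by
  cases L with
  | ssf => trivial
  | star =>
    obtain ⟨a, rfl⟩ := h
    exact ⟨a, id, rfl⟩

theorem okOutside.restrict {L : AtomLang α} {C : Set α} (h : L.okOutside C) (A : Set α)
    (m : ℕ) : (L.restrict A m).okOutside (A ∪ C) := by
  cases L with
  | ssf => trivial
  | star =>
    obtain ⟨a, haC, rfl⟩ := h
    simp only [AtomLang.restrict]
    split_ifs with hA
    · trivial
    · refine ⟨a, ?_, rfl⟩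
      rintro (haA | haC')
      exacts [hA ⟨a, haA, rfl⟩, haC haC']

end AtomLang

theorem satS_of_satS_qrestrict [Finite V] {Q : List (SCRPQ α V)} {A : Set α} {m : ℕ}
    {G : GDB α} (h : SatS (qrestrict Q A m) G) : SatS Q G := by
  obtain ⟨_, hqA, g, hg⟩ := satS_iff.1 h
  obtain ⟨q, hq, rfl⟩ := List.mem_map.1 hqA
  exact satS_iff.2 ⟨q, hq, g, fun i => (hg i).mono (AtomLang.language_restrict_subset A m _)⟩

section Shortening

variable {β : Type} {R : β → β → Prop}

theorem exists_shorter_walk_of_eq {n p r : ℕ} {f : ℕ → β} (hf : ∀ j < n, R (f j) (f (j + 1)))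
    (hpr : p < r) (hrn : r ≤ n) (hfpr : f p = f r) :
    ∃ g : ℕ → β, g 0 = f 0 ∧ g (n - (r - p)) = f n ∧
      ∀ j < n - (r - p), R (g j) (g (j + 1)) := by
  refine ⟨fun j => if j ≤ p then f j else f (j + (r - p)), by simp, ?_, fun j hj => ?_⟩
  · dsimp only
    split_ifs with h
    · rw [show n - (r - p) = p by omega, hfpr, show r = n by omega]
    · rw [show n - (r - p) + (r - p) = n by omega]
  · dsimp only
    split_ifs with h₁ h₂ h₂
    · exact hf j (by omega)
    · rw [show j = p by omega, hfpr, show p + 1 + (r - p) = r + 1 by omega]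
      exact hf r (by omega)
    · omega
    · rw [show j + 1 + (r - p) = j + (r - p) + 1 by omega]
      exact hf _ (by omega)

theorem exists_walk_length_le_card (s : Finset β) (hs : ∀ x y, R x y → x ∈ s) (n : ℕ)
    (f : ℕ → β) (hf : ∀ j < n, R (f j) (f (j + 1))) :
    ∃ n' ≤ s.card, ∃ g : ℕ → β, g 0 = f 0 ∧ g n' = f n ∧ ∀ j < n', R (g j) (g (j + 1)) := by
  induction n using Nat.strong_induction_on generalizing f with
  | _ n ih =>
    by_cases hn : n ≤ s.card
    · exact ⟨n, hn, f, rfl, rfl, hf⟩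
    obtain ⟨p, r, hpr, hrn, hfpr⟩ : ∃ p r, p < r ∧ r < n ∧ f p = f r := by
      obtain ⟨p, hp, r, hr, hne, hfpr⟩ := Finset.exists_ne_map_eq_of_card_lt_of_maps_to
        (by simpa using hn) fun j hj => hs _ _ (hf j (Finset.mem_range.1 hj))
      rw [Finset.mem_range] at hp hr
      rcases hne.lt_or_gt with h | h
      exacts [⟨p, r, h, hr, hfpr⟩, ⟨r, p, h, hp, hfpr.symm⟩]
    obtain ⟨g, hg0, hgn, hg⟩ := exists_shorter_walk_of_eq hf hpr hrn.le hfpr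
    obtain ⟨n', hn', g', hg'0, hg'n, hg'⟩ := ih _ (by omega) g hg
    exact ⟨n', hn', g', hg'0.trans hg0, hg'n.trans hgn, hg'⟩

end Shortening

theorem GDB.HasWalkIn.restrict {G : GDB α} {A : Set α} (s : Finset G.V)
    (hs : ∀ a ∈ A, ∀ x y, (x, a, y) ∈ G.edges → x ∈ s) {m : ℕ} (hm : s.card ≤ m)
    {u v : G.V} {L : AtomLang α} (h : G.HasWalkIn u L.language v) :
    G.HasWalkIn u (L.restrict A m).language v := by
  cases L with
  | ssf => exact h
  | star w =>
    simp only [AtomLang.restrict]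
    split_ifs with hw
    · obtain ⟨a, ha, rfl⟩ := hw
      obtain ⟨_, ⟨n, rfl⟩, hwalk⟩ := h
      rw [wpow_singleton, GDB.hasWalk_replicate_iff] at hwalk
      obtain ⟨f, rfl, rfl, hf⟩ := hwalk
      obtain ⟨n', hn', g, hg0, hgn, hg⟩ := exists_walk_length_le_card s (hs a ha) n f hf
      refine ⟨wpow [a] n', ⟨n', hn'.trans hm, rfl⟩, ?_⟩
      rw [wpow_singleton, GDB.hasWalk_replicate_iff]
      exact ⟨g, hg0, hgn, hg⟩
    · exact h

def AtomLang.ssfWords : AtomLang α → Set (List α)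
  | .ssf L _ => L
  | .star _ => ∅

theorem AtomLang.finite_ssfWords (L : AtomLang α) : L.ssfWords.Finite := by
  cases L with
  | ssf L hL => exact hL
  | star => exact Set.finite_empty

theorem exists_length_le_of_mem_ssfWords (Q : List (SCRPQ α V)) :
    ∃ N, ∀ q ∈ Q, ∀ i, ∀ u ∈ (q.lang i).ssfWords, u.length ≤ N := by
  have hfin : (⋃ q ∈ {q | q ∈ Q}, ⋃ i, (q.lang i).ssfWords).Finite :=
    Q.finite_toSet.biUnion fun q _ => Set.finite_iUnion fun i => (q.lang i).finite_ssfWords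
  obtain ⟨N, hN⟩ := (hfin.image List.length).bddAbove
  exact ⟨N, fun q hq i u hu => hN ⟨u, Set.mem_biUnion hq (Set.mem_iUnion_of_mem i hu), rfl⟩⟩

theorem AtomLang.okOutside.mem_ssfWords {L : AtomLang α} {A : Set α} (hL : L.okOutside A)
    {u : List α} (hu : u ∈ L.language) {a : α} (ha : a ∈ A) (hau : a ∈ u) :
    u ∈ L.ssfWords := by
  cases L with
  | ssf => exact hu
  | star =>
    obtain ⟨b, hb, rfl⟩ := hL
    obtain ⟨n, rfl⟩ := hu
    rw [wpow_singleton] at hau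
    exact absurd (List.eq_of_mem_replicate hau ▸ ha) hb

theorem exists_finset_sources_expansion [Finite V] {q : SCRPQ α V} {A : Set α}
    (hq : ∀ i, (q.lang i).okOutside A) {N : ℕ}
    (hN : ∀ i, ∀ u ∈ (q.lang i).ssfWords, u.length ≤ N) {w : Fin q.k → List α}
    (hw : ∀ i, w i ∈ (q.lang i).language) :
    ∃ s : Finset (expansion q.toCRPQ w).V, s.card ≤ q.k * N ∧
      ∀ a ∈ A, ∀ x y, (x, a, y) ∈ (expansion q.toCRPQ w).atoms → x ∈ s := by
  classical
  refine ⟨Finset.univ.image fun p : Fin q.k × Fin N => Quot.mk _ (node q.toCRPQ w p.1 p.2),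
    Finset.card_image_le.trans (by simp), ?_⟩
  rintro a ha _ _ ⟨i, j, hj, h⟩
  cases h
  have hssf : w i ∈ (q.lang i).ssfWords := (hq i).mem_ssfWords (hw i) ha (List.get_mem _ _)
  exact Finset.mem_image.2 ⟨(i, ⟨j, hj.trans_le (hN i _ hssf)⟩), Finset.mem_univ _, rfl⟩

theorem exists_qEquiv_qrestrict [Finite V] {W : Type} [Finite W] {Q : List (SCRPQ α V)}
    {Q' : List (SCRPQ α W)} {A : Set α} (hQ' : ∀ d ∈ Q', ∀ i, (d.lang i).okOutside A)
    (hQQ' : QEquiv (SatS Q) (SatS Q')) : ∃ m, QEquiv (SatS Q) (SatS (qrestrict Q A m)) := by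
  obtain ⟨N, hN⟩ := exists_length_le_of_mem_ssfWords Q'
  refine ⟨natoms Q' * N, fun G => ⟨fun hG => ?_, satS_of_satS_qrestrict⟩⟩
  obtain ⟨_, ⟨_, hqU, w, hw, rfl⟩, hE⟩ := (hQQ' G).1 hG
  obtain ⟨q', hq', rfl⟩ := List.mem_map.1 hqU
  obtain ⟨s, hs, hsrc⟩ := exists_finset_sources_expansion (hQ' q' hq') (hN q' hq') hw
  have hm : s.card ≤ natoms Q' * N :=
    hs.trans (Nat.mul_le_mul_right _ (List.le_sum_of_mem (List.mem_map_of_mem hq')))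
  obtain ⟨q, hq, g, hg⟩ := satS_iff.1 ((hQQ' _).2 (satS_toGDB_expansion hq' hw))
  exact satS_of_homToG hE
    (satS_iff.2 ⟨q.restrict A _, List.mem_map_of_mem hq, g, fun i => (hg i).restrict s hsrc hm⟩)

theorem exists_qEquiv_okOutside_sUnion [Finite V] {Q : List (SCRPQ α V)}
    (hQ : ∀ d ∈ Q, ∀ i, (d.lang i).inSSFaStar) {𝓑 : Set (Set α)} (h𝓑 : 𝓑.Finite)
    (hB : ∀ B ∈ 𝓑, BddIn Q B) :
    ∃ Q' : List (SCRPQ α V), QEquiv (SatS Q) (SatS Q') ∧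
      ∀ d ∈ Q', ∀ i, (d.lang i).okOutside (⋃₀ 𝓑) := by
  refine Set.Finite.induction_on_subset 𝓑 h𝓑 ?_ ?_
  · refine ⟨Q, fun G => Iff.rfl, fun d hd i => ?_⟩
    rw [Set.sUnion_empty]
    exact (hQ d hd i).okOutside_empty
  · rintro A 𝓒 hA - - ⟨Q', hQQ', hQ'⟩
    obtain ⟨n, Q'', hQ'', hQQ''⟩ := hB A hA
    obtain ⟨m, hm⟩ := exists_qEquiv_qrestrict hQ'' fun G => (hQQ' G).symm.trans (hQQ'' G)
    refine ⟨qrestrict Q' A m, fun G => (hQQ' G).trans (hm G), ?_⟩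
    simp only [qrestrict, List.mem_map]
    rintro _ ⟨d, hd, rfl⟩ i
    rw [Set.sUnion_insert]
    exact (hQ' d hd i).restrict A m

/-- the family `{A ⊆ Σ : q is A-bounded}` has a greatest element
under inclusion, namely the union of all sets `B` such that `q` is `B`-bounded. -/
theorem statement17 {α V : Type} [Fintype α] [Fintype V] (q : List (SCRPQ α V))
    (hclass : ∀ d ∈ q, ∀ i : Fin d.k, (d.lang i).in_a_aStar) :
    BddIn q { a | ∃ B : Set α, BddIn q B ∧ a ∈ B } ∧
    (∀ B : Set α, BddIn q B → B ⊆ { a | ∃ B' : Set α, BddIn q B' ∧ a ∈ B' }) := by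
  obtain ⟨Q', hQQ', hQ'⟩ := exists_qEquiv_okOutside_sUnion
    (fun d hd i => (hclass d hd i).inSSFaStar) (Set.toFinite {B : Set α | BddIn q B}) fun _ => id
  exact ⟨bddIn_of_qEquiv hQ' hQQ', fun B hB a ha => ⟨B, hB, ha⟩⟩

end Paper
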